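/- arXiv:1807.05689 — 3 statements merged into one kernel-verified Lean document; each statement's English description precedes it below -/
import Mathlib

section
/- Let p, λ ∈ ℝ with p ≠ −1. There exists a nonzero vector (C₂, C₃, C₄) ∈ ℝ³ with A(p,λ)·(C₂, C₃, C₄)ᵀ = (0,0,0)ᵀ if and only if cos(λπ/2) = (p−1)/(p+1). -/
open Real

/-- The 3×3 matrix encoding the boundary and interface conditions of the Sturm–Liouville
problem for the interface problem on the quarter-circle sector with interface at θ = π/4. -/
noncomputable def interfaceMatrix (p lam : ℝ) : Matrix (Fin 3) (Fin 3) ℝ :=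
  !![0, -Real.sin (lam * π / 2), Real.cos (lam * π / 2);
     Real.sin (lam * π / 4), -Real.cos (lam * π / 4), -Real.sin (lam * π / 4);
     Real.cos (lam * π / 4), p * Real.sin (lam * π / 4), -p * Real.cos (lam * π / 4)]

/-- For p ≠ −1, the homogeneous system A(p,λ)·(C₂,C₃,C₄)ᵀ = 0 has a nontrivial solution
iff cos(λπ/2) = (p−1)/(p+1). -/
theorem nontrivial_solution_iff (p lam : ℝ) (hp : p ≠ -1) :
    (∃ c : Fin 3 → ℝ, c ≠ 0 ∧ (interfaceMatrix p lam).mulVec c = 0) ↔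
      Real.cos (lam * π / 2) = (p - 1) / (p + 1) := by
  rw [Matrix.exists_mulVec_eq_zero_iff]
  obtain ⟨s, c, hs4, hc4⟩ : ∃ s c, Real.sin (lam * π / 4) = s ∧ Real.cos (lam * π / 4) = c :=
    ⟨_, _, rfl, rfl⟩
  have hpyt : s ^ 2 + c ^ 2 = 1 := by rw [← hs4, ← hc4]; exact Real.sin_sq_add_cos_sq _
  have hs : Real.sin (lam * π / 2) = 2 * s * c := by
    rw [show lam * π / 2 = 2 * (lam * π / 4) by ring, Real.sin_two_mul, hs4, hc4]
  have hc : Real.cos (lam * π / 2) = c ^ 2 - s ^ 2 := by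
    rw [show lam * π / 2 = 2 * (lam * π / 4) by ring, Real.cos_two_mul, hc4]
    nlinarith [hpyt]
  have hp1 : p + 1 ≠ 0 := fun h => hp (by linarith)
  have hdet : (interfaceMatrix p lam).det = c ^ 2 - p * s ^ 2 := by
    simp [interfaceMatrix, Matrix.det_fin_three, hs, hc, hs4, hc4]
    linear_combination (c ^ 2 - p * s ^ 2) * hpyt
  rw [hdet, hc, eq_div_iff hp1]
  constructor
  · intro h; linear_combination 2 * h + (p - 1) * hpyt
  · intro h; linear_combination h / 2 - (p - 1) / 2 * hpyt
end

section
/- Let p, λ ∈ ℝ satisfy cos(λπ/2) = (p−1)/(p+1), p ≠ −1, and suppose sin(λπ/4) ≠ 0, cos(λπ/4) ≠ 0, and cos(λπ/2) ≠ 0. Then the vector (C₂, C₃, C₄) with C₂ = cot(λπ/4) + tan(λπ/2), C₃ = 1, C₄ = tan(λπ/2) satisfies A(p,λ)·(C₂, C₃, C₄)ᵀ = (0,0,0)ᵀ; i.e., it is a nontrivial solution of the homogeneous system encoding the boundary and interface conditions. -/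
/-!
Write `x = λπ/4`. Together with `sin² x + cos² x = 1`, the determinant condition
`cos 2x = (p - 1)/(p + 1)` forces `cos² x = p sin² x`. The first two rows of the system
vanish identically (`tan 2x cos 2x = sin 2x`, `sin x cot x = cos x`); after clearing the
denominators `sin x` and `cos 2x`, the third row becomes `(cos² x - p sin² x)(cos² x + sin² x) = 0`.
-/

open Real

open Matrix

theorem interfaceMatrix_mulVec (p lam a b c : ℝ) :
    interfaceMatrix p lam *ᵥ ![a, b, c] =
      ![cos (lam * π / 2) * c - sin (lam * π / 2) * b,
        sin (lam * π / 4) * (a - c) - cos (lam * π / 4) * b,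
        cos (lam * π / 4) * (a - p * c) + p * sin (lam * π / 4) * b] := by
  ext i
  fin_cases i <;> simp [interfaceMatrix] <;> ring

theorem Real.sin_mul_cot {x : ℝ} (hx : sin x ≠ 0) : sin x * cot x = cos x := by
  rw [cot_eq_cos_div_sin, mul_div_cancel₀ _ hx]

theorem cos_sq_eq_mul_sin_sq_of_cos_two_mul_eq {x p : ℝ}
    (h : cos (2 * x) = (p - 1) / (p + 1)) (h₀ : cos (2 * x) ≠ 0) :
    cos x ^ 2 = p * sin x ^ 2 := by
  have hp : p + 1 ≠ 0 := fun hp ↦ h₀ (by rw [h, hp, div_zero])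
  rw [cos_two_mul', eq_div_iff hp] at h
  linear_combination h / 2 - (p - 1) / 2 * sin_sq_add_cos_sq x

theorem cos_mul_cot_add_one_sub_mul_tan_two_mul {x p : ℝ} (hsin : sin x ≠ 0)
    (hcos2 : cos (2 * x) ≠ 0) (h : cos x ^ 2 = p * sin x ^ 2) :
    cos x * (cot x + (1 - p) * tan (2 * x)) = -(p * sin x) := by
  rw [cot_eq_cos_div_sin, tan_eq_sin_div_cos, sin_two_mul]
  rw [cos_two_mul'] at hcos2 ⊢
  field_simp
  linear_combination (cos x ^ 2 + sin x ^ 2) * h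

theorem explicit_nontrivial_solution_general (p lam : ℝ)
    (hdet : Real.cos (lam * π / 2) = (p - 1) / (p + 1))
    (hsin : Real.sin (lam * π / 4) ≠ 0)
    (hcos2 : Real.cos (lam * π / 2) ≠ 0) :
    (interfaceMatrix p lam).mulVec
        ![Real.cot (lam * π / 4) + Real.tan (lam * π / 2), 1, Real.tan (lam * π / 2)] = 0 := by
  have hx : lam * π / 2 = 2 * (lam * π / 4) := by ring
  rw [interfaceMatrix_mulVec, hx]
  rw [hx] at hdet hcos2
  generalize lam * π / 4 = x at *
  simp only [cons_eq_zero_iff, zero_empty, and_true]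
  refine ⟨?_, ?_, ?_⟩
  · rw [mul_one, ← tan_mul_cos hcos2, mul_comm, sub_self]
  · rw [add_sub_cancel_right, sin_mul_cot hsin, mul_one, sub_self]
  · linear_combination cos_mul_cot_add_one_sub_mul_tan_two_mul hsin hcos2
      (cos_sq_eq_mul_sin_sq_of_cos_two_mul_eq hdet hcos2)

/-- If cos(λπ/2) = (p−1)/(p+1) (the determinant condition), then
(C₂, C₃, C₄) = (cot(λπ/4) + tan(λπ/2), 1, tan(λπ/2)) is a nontrivial solution of the
homogeneous system A(p,λ)·(C₂,C₃,C₄)ᵀ = 0. -/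
theorem explicit_nontrivial_solution (p lam : ℝ) (hp : p ≠ -1)
    (hdet : Real.cos (lam * π / 2) = (p - 1) / (p + 1))
    (hsin : Real.sin (lam * π / 4) ≠ 0) (hcos : Real.cos (lam * π / 4) ≠ 0)
    (hcos2 : Real.cos (lam * π / 2) ≠ 0) :
    (interfaceMatrix p lam).mulVec
        ![Real.cot (lam * π / 4) + Real.tan (lam * π / 2), 1, Real.tan (lam * π / 2)] = 0 :=
  explicit_nontrivial_solution_general p lam hdet hsin hcos2
end

section
/- Let p > 1 and λ = λ₀(p) = (2/π)·arccos((p−1)/(p+1)). Define W : [0, π/2] → ℝ by W(θ) = (cot(λπ/4) + tan(λπ/2))·sin λθ for 0 ≤ θ ≤ π/4 and W(θ) = cos λθ + tan(λπ/2)·sin λθ for π/4 ≤ θ ≤ π/2. Then: (i) the two formulas agree at θ = π/4, so W is well defined and continuous; (ii) W is not identically zero; (iii) W(0) = 0; (iv) the derivative of θ ↦ cos λθ + tan(λπ/2) sin λθ vanishes at θ = π/2; (v) each of the two defining functions satisfies the ODE W'' = −λ²W; and (vi) the left derivative of W at π/4 equals p times the right derivative of W at π/4. Hence W is a nontrivial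 eigenfunction of the Sturm–Liouville interface problem for the eigenvalue λ₀(p). -/
open Real Set

/-!
With `a = λπ/4` we have `cos 2a = (p-1)/(p+1)`, which by the half-angle formulas is
`cot² a = p`. Both branches are sinusoids `A cos λθ + B sin λθ`, so the ODE and the
boundary conditions are immediate, and the transmission condition at `π/4` reduces to the
identity `(cot a + tan 2a) cos a = p (tan 2a cos a - sin a)`, a consequence of `cot² a = p`.
-/

noncomputable def sinusoid (lam A B θ : ℝ) : ℝ := A * cos (lam * θ) + B * sin (lam * θ)

theorem hasDerivAt_sinusoid (lam A B x : ℝ) :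
    HasDerivAt (sinusoid lam A B) (sinusoid lam (lam * B) (-(lam * A)) x) x := by
  have hlin : HasDerivAt (fun θ => lam * θ) lam x := by
    simpa using (hasDerivAt_id x).const_mul lam
  refine ((hlin.cos.const_mul A).add (hlin.sin.const_mul B)).congr_deriv ?_
  simp only [sinusoid]
  ring

theorem deriv_sinusoid (lam A B : ℝ) :
    deriv (sinusoid lam A B) = sinusoid lam (lam * B) (-(lam * A)) :=
  funext fun x => (hasDerivAt_sinusoid lam A B x).deriv

theorem deriv_deriv_sinusoid (lam A B x : ℝ) :
    deriv (deriv (sinusoid lam A B)) x = -lam ^ 2 * sinusoid lam A B x := by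
  rw [deriv_sinusoid, deriv_sinusoid, sinusoid, sinusoid]
  ring

theorem derivWithin_ite_le_Iic {f g : ℝ → ℝ} {f' x₀ : ℝ}
    (hf : HasDerivWithinAt f f' (Iic x₀) x₀) :
    derivWithin (fun θ => if θ ≤ x₀ then f θ else g θ) (Iic x₀) x₀ = f' := by
  have heq : EqOn (fun θ => if θ ≤ x₀ then f θ else g θ) f (Iic x₀) :=
    fun θ (hθ : θ ≤ x₀) => if_pos hθ
  exact (hf.congr heq (heq self_mem_Iic)).derivWithin (uniqueDiffOn_Iic x₀ x₀ self_mem_Iic)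

theorem derivWithin_ite_le_Ici {f g : ℝ → ℝ} {g' x₀ : ℝ} (hfg : f x₀ = g x₀)
    (hg : HasDerivWithinAt g g' (Ici x₀) x₀) :
    derivWithin (fun θ => if θ ≤ x₀ then f θ else g θ) (Ici x₀) x₀ = g' := by
  have heq : EqOn (fun θ => if θ ≤ x₀ then f θ else g θ) g (Ici x₀) := by
    intro θ (hθ : x₀ ≤ θ)
    by_cases hle : θ ≤ x₀
    · simp only [le_antisymm hle hθ, le_rfl, if_true, hfg]
    · simp only [if_neg hle]
  exact (hg.congr heq (heq self_mem_Ici)).derivWithin (uniqueDiffOn_Ici x₀ x₀ self_mem_Ici)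

theorem cos_sq_eq_mul_sin_sq_of_cos_two_mul {a p : ℝ} (hp : p + 1 ≠ 0)
    (h : cos (2 * a) = (p - 1) / (p + 1)) : cos a ^ 2 = p * sin a ^ 2 := by
  have h2 : (2 * cos a ^ 2 - 1) * (p + 1) = p - 1 := by
    rw [← cos_two_mul, h]; field_simp
  linear_combination h2 / 2 - p * sin_sq_add_cos_sq a

theorem cot_add_tan_two_mul_mul_cos {a p : ℝ} (hs : sin a ≠ 0) (hc : cos (2 * a) ≠ 0)
    (hp : cos a ^ 2 = p * sin a ^ 2) :
    (cot a + tan (2 * a)) * cos a = p * (tan (2 * a) * cos a - sin a) := by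
  rw [cot_eq_cos_div_sin, tan_eq_sin_div_cos, sin_two_mul]
  rw [cos_two_mul'] at hc ⊢
  field_simp
  linear_combination (cos a ^ 2 + sin a ^ 2) * hp

theorem cos_add_tan_mul_sin_ne_zero {b : ℝ} (hb : cos b ≠ 0) : cos b + tan b * sin b ≠ 0 := by
  have : cos b + tan b * sin b = 1 / cos b := by
    rw [tan_eq_sin_div_cos]
    field_simp
    linear_combination sin_sq_add_cos_sq b
  rw [this]
  exact one_div_ne_zero hb

/-- For p > 1 and λ = λ₀(p) = (2/π)·arccos((p−1)/(p+1)), the piecewise function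
W(θ) = (cot(λπ/4)+tan(λπ/2))·sin λθ on [0,π/4], W(θ) = cos λθ + tan(λπ/2)·sin λθ on
[π/4,π/2] is a nontrivial eigenfunction of the Sturm–Liouville interface problem:
(i) the two branches agree at θ = π/4, (ii) W is not identically zero, (iii) W(0) = 0,
(iv) the second branch has vanishing derivative at π/2, (v) both branches satisfy
W'' = −λ²W, and (vi) the left derivative of W at π/4 equals p times its right derivative. -/
theorem eigenfunction_properties (p : ℝ) (hp : 1 < p) (lam : ℝ)
    (hlam : lam = (2 / π) * Real.arccos ((p - 1) / (p + 1)))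
    (f₁ f₂ W : ℝ → ℝ)
    (hf₁ : f₁ = fun θ => (Real.cot (lam * π / 4) + Real.tan (lam * π / 2)) *
      Real.sin (lam * θ))
    (hf₂ : f₂ = fun θ => Real.cos (lam * θ) + Real.tan (lam * π / 2) * Real.sin (lam * θ))
    (hW : W = fun θ => if θ ≤ π / 4 then f₁ θ else f₂ θ) :
    f₁ (π / 4) = f₂ (π / 4) ∧
    (∃ θ ∈ Set.Icc (0 : ℝ) (π / 2), W θ ≠ 0) ∧
    W 0 = 0 ∧
    deriv f₂ (π / 2) = 0 ∧
    (∀ θ : ℝ, deriv (deriv f₁) θ = -lam ^ 2 * f₁ θ ∧ deriv (deriv f₂) θ = -lam ^ 2 * f₂ θ) ∧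
    derivWithin W (Set.Iic (π / 4)) (π / 4) = p * derivWithin W (Set.Ici (π / 4)) (π / 4) := by
  have hq0 : 0 < (p - 1) / (p + 1) := div_pos (by linarith) (by linarith)
  have hq1 : (p - 1) / (p + 1) < 1 := (div_lt_one (by linarith)).2 (by linarith)
  set a := lam * π / 4
  have h2a : lam * π / 2 = 2 * a := by ring
  have harccos : arccos ((p - 1) / (p + 1)) = 2 * a := by
    rw [← h2a, hlam]
    field_simp
  have hcos2a : cos (2 * a) = (p - 1) / (p + 1) := by
    rw [← harccos, cos_arccos (by linarith) hq1.le]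
  have ha0 : 0 < a := by linarith [arccos_pos.2 hq1]
  have ha1 : a < π / 4 := by linarith [arccos_lt_pi_div_two.2 hq0]
  have hsin : sin a ≠ 0 := (sin_pos_of_pos_of_lt_pi ha0 (by linarith)).ne'
  have hcos : cos (2 * a) ≠ 0 := hcos2a ▸ hq0.ne'
  have hcot : cos a ^ 2 = p * sin a ^ 2 :=
    cos_sq_eq_mul_sin_sq_of_cos_two_mul (by linarith) hcos2a
  have e₁ : f₁ = sinusoid lam 0 (cot a + tan (2 * a)) := by
    rw [hf₁, h2a]; funext θ; simp [sinusoid]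
  have e₂ : f₂ = sinusoid lam 1 (tan (2 * a)) := by
    rw [hf₂, h2a]; funext θ; simp [sinusoid]
  have hπ4 : lam * (π / 4) = a := by ring
  have hπ2 : lam * (π / 2) = 2 * a := by ring
  have hmatch : f₁ (π / 4) = f₂ (π / 4) := by
    simp only [e₁, e₂, sinusoid, hπ4, cot_eq_cos_div_sin]
    field_simp
    ring
  refine ⟨hmatch, ⟨π / 2, ⟨by positivity, le_rfl⟩, ?_⟩, ?_, ?_, fun θ => ⟨?_, ?_⟩, ?_⟩
  · simp only [hW, e₂, sinusoid, hπ2, if_neg (by linarith : ¬π / 2 ≤ π / 4), one_mul]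
    exact cos_add_tan_mul_sin_ne_zero hcos
  · simp only [hW, if_pos (by positivity : (0 : ℝ) ≤ π / 4), e₁, sinusoid]
    simp
  · simp only [e₂, deriv_sinusoid, sinusoid, hπ2]
    linear_combination lam * tan_mul_cos hcos
  · rw [e₁, deriv_deriv_sinusoid]
  · rw [e₂, deriv_deriv_sinusoid]
  · rw [hW, derivWithin_ite_le_Iic (e₁ ▸ hasDerivAt_sinusoid _ _ _ _).hasDerivWithinAt,
      derivWithin_ite_le_Ici hmatch (e₂ ▸ hasDerivAt_sinusoid _ _ _ _).hasDerivWithinAt]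
    simp only [sinusoid, hπ4]
    linear_combination lam * cot_add_tan_two_mul_mul_cos hsin hcos hcot
end
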